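/- arXiv:0906.2484 — 2 statements merged into one kernel-verified Lean document; each statement's English description precedes it below -/
import Mathlib

section
/- Fix δ ∈ (0,1/3], let μ be the Borel measure on ℝ determined by μ([j + i·3^{−n}, j + (i+1)·3^{−n})) = δ^{n−k(i)}(1−2δ)^{k(i)} for all integers j, n ≥ 0 and 0 ≤ i < 3^n (where k(i) is the number of digits equal to 1 among the first n ternary digits of i), and let ν = μ × ⋯ × μ be the d-fold product measure on ℝ^d. Then ν is a doubling measure on ℝ^d: there is a constant C < ∞, depending only on δ and d, such that ν(B(x,2r)) ≤ C·ν(B(x,r)) for all x ∈ ℝ^d and r > 0. -/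
open MeasureTheory Set

noncomputable section

/-- The number of ternary (base-3) digits of `i` equal to `1`. -/
def ternaryOnes (i : ℕ) : ℕ := (Nat.digits 3 i).count 1

/-- The triadic mass assignment determining the measure `μ`. -/
def ternarySpec (δ : ℝ) (μ : Measure ℝ) : Prop :=
  ∀ (j : ℤ) (n i : ℕ), i < 3 ^ n →
    μ (Set.Ico ((j : ℝ) + (i : ℝ) / 3 ^ n) ((j : ℝ) + ((i : ℝ) + 1) / 3 ^ n)) =
      ENNReal.ofReal (δ ^ (n - ternaryOnes i) * (1 - 2 * δ) ^ ternaryOnes i)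

/-- A Borel measure `ν` on a metric space is *doubling* if there is a finite constant `C`
such that `ν (B(x, 2r)) ≤ C * ν (B(x, r))` for every center `x` and every radius `r > 0`. -/
def IsDoubling {X : Type*} [PseudoMetricSpace X] [MeasurableSpace X] (ν : Measure X) : Prop :=
  ∃ C : NNReal, ∀ (x : X) (r : ℝ), 0 < r → ν (Metric.ball x (2 * r)) ≤ C * ν (Metric.ball x r)

/-- The `d`-fold product `ν = μ × ⋯ × μ` of the triadic measure `μ`, viewed as a measure on
Euclidean space `ℝ^d`. -/
def nuProd (d : ℕ) (μ : Measure ℝ) : Measure (EuclideanSpace ℝ (Fin d)) :=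
  Measure.map (MeasurableEquiv.toLp 2 (Fin d → ℝ)) (Measure.pi fun _ : Fin d => μ)

/-! Level-`n` cells carry masses `δ ^ n * ρ ^ k` with `ρ = (1 - 2δ)/δ ≥ 1`, and `k` changes by at
most one between neighbouring cells. A ball of radius `r ∈ [3⁻ⁿ, 3¹⁻ⁿ]` contains the cell of its
centre, while its double is covered by the 13 surrounding cells, each at most `ρ ^ 6` times
heavier. For `r ≥ 2` the measure of a ball is comparable to its length, as every unit interval
has mass `1`. Doubling passes to products, since balls of the sup metric are products of balls,
and then to `ℝ^d`, which is bi-Lipschitz equivalent to the sup metric. -/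

open scoped ENNReal NNReal
open Metric

section Doubling

variable {X Y : Type*} [PseudoMetricSpace X] [MeasurableSpace X]
  [PseudoMetricSpace Y] [MeasurableSpace Y]

lemma measure_ball_two_pow_mul_le {ν : Measure X} {C : ℝ≥0}
    (hC : ∀ (x : X) (r : ℝ), 0 < r → ν (ball x (2 * r)) ≤ C * ν (ball x r))
    (j : ℕ) (x : X) {r : ℝ} (hr : 0 < r) : ν (ball x (2 ^ j * r)) ≤ C ^ j * ν (ball x r) := by
  induction j with
  | zero => simp
  | succ j ih =>
    calc ν (ball x (2 ^ (j + 1) * r)) = ν (ball x (2 * (2 ^ j * r))) := by ring_nf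
      _ ≤ C * ν (ball x (2 ^ j * r)) := hC x _ (by positivity)
      _ ≤ C * (C ^ j * ν (ball x r)) := by gcongr
      _ = C ^ (j + 1) * ν (ball x r) := by rw [pow_succ']; ring

theorem IsDoubling.map_of_lipschitzWith {ν : Measure X} (hν : IsDoubling ν) (e : X ≃ᵐ Y)
    {K K' : ℝ≥0} (he : LipschitzWith K e) (he' : LipschitzWith K' e.symm) :
    IsDoubling (ν.map e) := by
  obtain ⟨C, hC⟩ := hν
  have hL := he.weaken (le_self_add : K ≤ K + 1)
  have hL' := he'.weaken (le_self_add : K' ≤ K' + 1)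
  obtain ⟨j, hj⟩ := pow_unbounded_of_one_lt (2 * (K + 1) * (K' + 1) : ℝ) one_lt_two
  refine ⟨C ^ j, fun y r hr => ?_⟩
  have hK : (0 : ℝ) < K + 1 := by positivity
  have hrK : 0 < r / (K + 1) := by positivity
  rw [e.map_apply, e.map_apply]
  calc ν (e ⁻¹' ball y (2 * r)) ≤ ν (ball (e.symm y) (2 ^ j * (r / (K + 1)))) := by
        refine measure_mono fun a ha => ?_
        have := hL'.mapsTo_ball (by positivity) y (2 * r) ha
        rw [e.symm_apply_apply] at this
        refine ball_subset_ball ?_ this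
        rw [mul_div_assoc', le_div_iff₀ hK]
        push_cast
        nlinarith
    _ ≤ C ^ j * ν (ball (e.symm y) (r / (K + 1))) := measure_ball_two_pow_mul_le hC j _ hrK
    _ ≤ C ^ j * ν (e ⁻¹' ball y r) := by
        gcongr
        intro a ha
        have := hL.mapsTo_ball (by positivity) _ _ ha
        rwa [e.apply_symm_apply, NNReal.coe_add, NNReal.coe_one, mul_div_cancel₀ _ hK.ne'] at this

theorem IsDoubling.pi {ι : Type*} [Fintype ι] {μ : Measure X} [SigmaFinite μ]
    (hμ : IsDoubling μ) : IsDoubling (Measure.pi fun _ : ι => μ) := by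
  obtain ⟨C, hC⟩ := hμ
  refine ⟨C ^ Fintype.card ι, fun x r hr => ?_⟩
  rw [ball_pi x (by positivity), ball_pi x hr, Measure.pi_pi, Measure.pi_pi, ENNReal.coe_pow,
    ← Finset.card_univ, ← Finset.prod_const, ← Finset.prod_mul_distrib]
  exact Finset.prod_le_prod' fun i _ => hC (x i) r hr

end Doubling

@[simp]
lemma ternaryOnes_zero : ternaryOnes 0 = 0 := by simp [ternaryOnes]

lemma ternaryOnes_eq_div_add (i : ℕ) :
    ternaryOnes i = ternaryOnes (i / 3) + if i % 3 = 1 then 1 else 0 := by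
  rcases Nat.eq_zero_or_pos i with rfl | hi
  · simp
  unfold ternaryOnes
  rw [Nat.digits_def' (by norm_num) hi, List.count_cons]
  simp only [beq_iff_eq]

lemma ternaryOnes_le_of_lt_pow {i n : ℕ} (h : i < 3 ^ n) : ternaryOnes i ≤ n :=
  (List.count_le_length ..).trans ((Nat.digits_length_le_iff (by norm_num) i).2 h)

lemma ternaryOnes_pow_sub_one (n : ℕ) : ternaryOnes (3 ^ n - 1) = 0 := by
  induction n with
  | zero => simp
  | succ n ih =>
    have h : 3 ^ (n + 1) - 1 = 3 * (3 ^ n - 1) + 2 := by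
      have := Nat.one_le_pow n 3 (by norm_num)
      rw [pow_succ]; omega
    rw [ternaryOnes_eq_div_add, h]
    simp [Nat.mul_add_div, ih]

lemma ternaryOnes_succ_le_and_le_succ (i : ℕ) :
    ternaryOnes (i + 1) ≤ ternaryOnes i + 1 ∧ ternaryOnes i ≤ ternaryOnes (i + 1) + 1 := by
  induction i using Nat.strong_induction_on with
  | _ i ih =>
    rw [ternaryOnes_eq_div_add (i + 1), ternaryOnes_eq_div_add i]
    by_cases h : i % 3 = 2
    · have := ih (i / 3) (by omega)
      rw [show (i + 1) / 3 = i / 3 + 1 by omega]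
      split_ifs <;> omega
    · rw [show (i + 1) / 3 = i / 3 by omega]
      split_ifs <;> omega

/-- `k(i)` for the index `i` of `cell n t` inside its unit interval. -/
def cellOnes (n : ℕ) (t : ℤ) : ℕ := ternaryOnes (t % 3 ^ n).toNat

lemma toNat_emod_pow_lt (n : ℕ) (t : ℤ) : (t % 3 ^ n).toNat < 3 ^ n :=
  (Int.toNat_lt' (by positivity)).2 (by exact_mod_cast Int.emod_lt_of_pos t (by positivity))

lemma cellOnes_le (n : ℕ) (t : ℤ) : cellOnes n t ≤ n :=
  ternaryOnes_le_of_lt_pow (toNat_emod_pow_lt n t)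

lemma cellOnes_succ_le_and_le_succ (n : ℕ) (t : ℤ) :
    cellOnes n (t + 1) ≤ cellOnes n t + 1 ∧ cellOnes n t ≤ cellOnes n (t + 1) + 1 := by
  have hN : (0 : ℤ) < 3 ^ n := by positivity
  have h0 := Int.emod_nonneg t hN.ne'
  have hlt := toNat_emod_pow_lt n t
  have hmod : (t + 1) % 3 ^ n = (t % 3 ^ n + 1) % 3 ^ n := by rw [Int.emod_add_emod]
  have hcast : ((3 ^ n : ℕ) : ℤ) = 3 ^ n := by push_cast; rfl
  rcases (show t % 3 ^ n + 1 < 3 ^ n ∨ t % 3 ^ n + 1 = 3 ^ n by omega) with h | h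
  · rw [Int.emod_eq_of_lt (by omega) h] at hmod
    rw [cellOnes, cellOnes, hmod, show (t % 3 ^ n + 1).toNat = (t % 3 ^ n).toNat + 1 by omega]
    exact ternaryOnes_succ_le_and_le_succ _
  · -- the last cell `3 ^ n - 1` of a unit interval has no ones, like the first cell `0`
    rw [h, Int.emod_self] at hmod
    have : (t % 3 ^ n).toNat = 3 ^ n - 1 := by omega
    simp [cellOnes, hmod, this, ternaryOnes_pow_sub_one]

lemma cellOnes_le_add_natAbs (n : ℕ) (s t : ℤ) :
    cellOnes n s ≤ cellOnes n t + (s - t).natAbs := by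
  suffices h : ∀ m t, cellOnes n (t + m) ≤ cellOnes n t + m.natAbs by
    simpa using h (s - t) t
  intro m
  induction m using Int.induction_on with
  | zero => simp
  | succ i ih =>
    intro t
    have := (cellOnes_succ_le_and_le_succ n (t + i)).1
    have := ih t
    rw [← add_assoc]
    omega
  | pred i ih =>
    intro t
    have hstep := (cellOnes_succ_le_and_le_succ n (t + (-i - 1))).2
    rw [show t + (-(i : ℤ) - 1) + 1 = t + -i by ring] at hstep
    have := ih t
    omega

def cell (n : ℕ) (t : ℤ) : Set ℝ := Ico (t / 3 ^ n) ((t + 1) / 3 ^ n)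

lemma mem_cell_iff {n : ℕ} {t : ℤ} {y : ℝ} : y ∈ cell n t ↔ ⌊y * 3 ^ n⌋ = t := by
  rw [cell, mem_Ico, Int.floor_eq_iff, div_le_iff₀ (by positivity), lt_div_iff₀ (by positivity)]

lemma pow_sub_mul_pow_eq {a : ℝ} (ha : a ≠ 0) (b : ℝ) {k n : ℕ} (hk : k ≤ n) :
    a ^ (n - k) * b ^ k = a ^ n * (b / a) ^ k := by
  rw [pow_sub₀ a ha hk, div_pow]
  field_simp

lemma one_le_one_sub_two_mul_div {δ : ℝ} (hδ0 : 0 < δ) (hδ : δ ≤ 1 / 3) : 1 ≤ (1 - 2 * δ) / δ := by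
  rw [le_div_iff₀ hδ0]
  linarith

namespace ternarySpec

variable {δ : ℝ} {μ : Measure ℝ}

lemma measure_cell (hμ : ternarySpec δ μ) (hδ : 0 < δ) (n : ℕ) (t : ℤ) :
    μ (cell n t) = ENNReal.ofReal (δ ^ n * ((1 - 2 * δ) / δ) ^ cellOnes n t) := by
  have hN : (0 : ℤ) < 3 ^ n := by positivity
  have hi : ((t % 3 ^ n).toNat : ℝ) = ((t % 3 ^ n : ℤ) : ℝ) := by
    exact_mod_cast Int.toNat_of_nonneg (Int.emod_nonneg t hN.ne')
  have ht : (t : ℝ) = 3 ^ n * ((t / 3 ^ n : ℤ) : ℝ) + ((t % 3 ^ n : ℤ) : ℝ) := by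
    exact_mod_cast (Int.mul_ediv_add_emod t (3 ^ n)).symm
  have h := hμ (t / 3 ^ n) n _ (toNat_emod_pow_lt n t)
  rw [← pow_sub_mul_pow_eq hδ.ne' _ (cellOnes_le n t), cellOnes, ← h, cell, hi, ht]
  congr 2 <;> field_simp
  ring

lemma measure_cell_le (hμ : ternarySpec δ μ) (hδ0 : 0 < δ) (hδ : δ ≤ 1 / 3) (n : ℕ) (s t : ℤ) :
    μ (cell n s) ≤ ENNReal.ofReal (((1 - 2 * δ) / δ) ^ (s - t).natAbs) * μ (cell n t) := by
  have hρ := one_le_one_sub_two_mul_div hδ0 hδ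
  rw [hμ.measure_cell hδ0, hμ.measure_cell hδ0, ← ENNReal.ofReal_mul (by positivity)]
  refine ENNReal.ofReal_le_ofReal ?_
  calc δ ^ n * ((1 - 2 * δ) / δ) ^ cellOnes n s
      ≤ δ ^ n * ((1 - 2 * δ) / δ) ^ (cellOnes n t + (s - t).natAbs) := by
        gcongr
        exact cellOnes_le_add_natAbs n s t
    _ = _ := by ring

lemma measure_Ico_intCast (hμ : ternarySpec δ μ) (a b : ℤ) :
    μ (Ico (a : ℝ) b) = ENNReal.ofReal (b - a) := by
  rcases lt_or_ge b a with hba | hab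
  · rw [Ico_eq_empty (not_lt.2 (by exact_mod_cast hba.le)), measure_empty,
      ENNReal.ofReal_of_nonpos (by simp only [sub_nonpos]; exact_mod_cast hba.le)]
  induction b, hab using Int.leInduction with
  | base => simp
  | succ b hab ih =>
    have hunit : μ (Ico (b : ℝ) (b + 1)) = 1 := by simpa using hμ b 0 0 one_pos
    push_cast
    rw [← Ico_union_Ico_eq_Ico (Int.cast_le.2 hab) (by linarith),
      measure_union Ico_disjoint_Ico_same measurableSet_Ico, ih, hunit,
      ← ENNReal.ofReal_one, ← ENNReal.ofReal_add (by simpa using hab) zero_le_one]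
    ring_nf

lemma measure_Ioo_le (hμ : ternarySpec δ μ) (u v : ℝ) :
    μ (Ioo u v) ≤ ENNReal.ofReal (v - u + 2) := by
  calc μ (Ioo u v) ≤ μ (Ico (⌊u⌋ : ℝ) ⌈v⌉) :=
        measure_mono fun y hy => ⟨(Int.floor_le u).trans hy.1.le, hy.2.trans_le (Int.le_ceil v)⟩
    _ ≤ ENNReal.ofReal (v - u + 2) := by
        rw [hμ.measure_Ico_intCast]
        exact ENNReal.ofReal_le_ofReal (by linarith [Int.ceil_lt_add_one v, Int.sub_one_lt_floor u])

lemma ofReal_sub_two_le_measure_Ioo (hμ : ternarySpec δ μ) (u v : ℝ) :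
    ENNReal.ofReal (v - u - 2) ≤ μ (Ioo u v) := by
  calc ENNReal.ofReal (v - u - 2) ≤ μ (Ico ((⌊u⌋ + 1 : ℤ) : ℝ) ⌊v⌋) := by
        rw [hμ.measure_Ico_intCast]
        push_cast
        exact ENNReal.ofReal_le_ofReal (by linarith [Int.floor_le u, Int.sub_one_lt_floor v])
    _ ≤ μ (Ioo u v) := by
        refine measure_mono fun y hy => ⟨?_, hy.2.trans_le (Int.floor_le v)⟩
        exact (Int.lt_floor_add_one u).trans_le (by exact_mod_cast hy.1)

lemma isLocallyFiniteMeasure (hμ : ternarySpec δ μ) : IsLocallyFiniteMeasure μ :=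
  ⟨fun x => ⟨Ioo (x - 1) (x + 1), Ioo_mem_nhds (by linarith) (by linarith),
    (hμ.measure_Ioo_le _ _).trans_lt ENNReal.ofReal_lt_top⟩⟩

lemma measure_ball_two_mul_le_of_two_le (hμ : ternarySpec δ μ) (x : ℝ) {r : ℝ} (hr : 2 ≤ r) :
    μ (ball x (2 * r)) ≤ 5 * μ (ball x r) := by
  rw [Real.ball_eq_Ioo, Real.ball_eq_Ioo]
  calc μ (Ioo (x - 2 * r) (x + 2 * r)) ≤ ENNReal.ofReal (x + 2 * r - (x - 2 * r) + 2) :=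
        hμ.measure_Ioo_le _ _
    _ ≤ ENNReal.ofReal (5 * (x + r - (x - r) - 2)) := ENNReal.ofReal_le_ofReal (by linarith)
    _ = 5 * ENNReal.ofReal (x + r - (x - r) - 2) := by
        rw [ENNReal.ofReal_mul (by norm_num), ENNReal.ofReal_ofNat]
    _ ≤ 5 * μ (Ioo (x - r) (x + r)) := by gcongr; exact hμ.ofReal_sub_two_le_measure_Ioo _ _

lemma measure_ball_two_mul_le_of_le_three_pow (hμ : ternarySpec δ μ) (hδ0 : 0 < δ)
    (hδ : δ ≤ 1 / 3) (x : ℝ) {n : ℕ} {r : ℝ} (hr : 1 ≤ r * 3 ^ n) (hr' : r * 3 ^ n ≤ 3) :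
    μ (ball x (2 * r)) ≤ ENNReal.ofReal (13 * ((1 - 2 * δ) / δ) ^ 6) * μ (ball x r) := by
  have hρ := one_le_one_sub_two_mul_div hδ0 hδ
  have h3 : (0 : ℝ) < 3 ^ n := by positivity
  set t := ⌊x * 3 ^ n⌋
  have hcell : cell n t ⊆ ball x r := by
    intro y hy
    rw [mem_cell_iff] at hy
    obtain ⟨hy₁, hy₂⟩ := Int.floor_eq_iff.1 hy
    obtain ⟨hx₁, hx₂⟩ := Int.floor_eq_iff.1 (rfl : ⌊x * 3 ^ n⌋ = t)
    rw [mem_ball, Real.dist_eq, abs_lt]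
    constructor <;> nlinarith
  have hcover : ball x (2 * r) ⊆ ⋃ k ∈ Finset.Icc (-6 : ℤ) 6, cell n (t + k) := by
    intro y hy
    rw [mem_ball, Real.dist_eq, abs_lt] at hy
    have hu : (⌊y * 3 ^ n⌋ : ℝ) < t + 7 := by
      nlinarith [Int.floor_le (y * 3 ^ n), Int.lt_floor_add_one (x * 3 ^ n)]
    have hl : (t : ℝ) - 7 < ⌊y * 3 ^ n⌋ := by
      nlinarith [Int.lt_floor_add_one (y * 3 ^ n), Int.floor_le (x * 3 ^ n)]
    have hu' : ⌊y * 3 ^ n⌋ < t + 7 := by exact_mod_cast hu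
    have hl' : t - 7 < ⌊y * 3 ^ n⌋ := by exact_mod_cast hl
    refine mem_biUnion (x := ⌊y * 3 ^ n⌋ - t) (Finset.mem_Icc.2 ⟨by omega, by omega⟩) ?_
    rw [mem_cell_iff]
    ring
  calc μ (ball x (2 * r)) ≤ ∑ k ∈ Finset.Icc (-6 : ℤ) 6, μ (cell n (t + k)) :=
        (measure_mono hcover).trans (measure_biUnion_finset_le _ _)
    _ ≤ ∑ _k ∈ Finset.Icc (-6 : ℤ) 6, ENNReal.ofReal (((1 - 2 * δ) / δ) ^ 6) * μ (cell n t) := by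
        refine Finset.sum_le_sum fun k hk => (hμ.measure_cell_le hδ0 hδ n _ t).trans ?_
        have hk : (t + k - t).natAbs ≤ 6 := by rw [Finset.mem_Icc] at hk; omega
        gcongr
    _ = ENNReal.ofReal (13 * ((1 - 2 * δ) / δ) ^ 6) * μ (cell n t) := by
        rw [Finset.sum_const, Int.card_Icc, ENNReal.ofReal_mul (by norm_num), nsmul_eq_mul,
          mul_assoc]
        change ((13 : ℕ) : ℝ≥0∞) * _ = _
        norm_num
    _ ≤ ENNReal.ofReal (13 * ((1 - 2 * δ) / δ) ^ 6) * μ (ball x r) := by gcongr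

theorem isDoubling (hμ : ternarySpec δ μ) (hδ0 : 0 < δ) (hδ : δ ≤ 1 / 3) : IsDoubling μ := by
  have hρ := one_le_one_sub_two_mul_div hδ0 hδ
  refine ⟨(13 * ((1 - 2 * δ) / δ) ^ 6).toNNReal, fun x r hr => ?_⟩
  change _ ≤ ENNReal.ofReal _ * _
  rcases le_or_gt r 3 with hr3 | hr3
  · obtain ⟨n, hn, hn'⟩ := exists_nat_pow_near ((one_le_div hr).2 hr3) (by norm_num : (1 : ℝ) < 3)
    rw [le_div_iff₀ hr, mul_comm] at hn
    rw [div_lt_iff₀ hr, pow_succ] at hn'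
    exact hμ.measure_ball_two_mul_le_of_le_three_pow hδ0 hδ x (by linarith) hn
  · refine (hμ.measure_ball_two_mul_le_of_two_le x (by linarith)).trans ?_
    rw [← ENNReal.ofReal_ofNat]
    gcongr
    nlinarith [one_le_pow₀ (n := 6) hρ]

end ternarySpec

theorem product_ternary_measure_is_doubling_general (d : ℕ) (δ : ℝ)
    (hδ0 : 0 < δ) (hδ : δ ≤ 1 / 3) (μ : Measure ℝ) (hμ : ternarySpec δ μ) :
    IsDoubling (nuProd d μ) := by
  have := hμ.isLocallyFiniteMeasure
  exact (hμ.isDoubling hδ0 hδ).pi.map_of_lipschitzWith _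
    (PiLp.lipschitzWith_toLp 2 _) (PiLp.lipschitzWith_ofLp 2 _)

/-- The `d`-fold product of the triadic measure `μ` is a doubling measure on `ℝ^d`. -/
theorem product_ternary_measure_is_doubling (d : ℕ) (hd : 2 ≤ d) (δ : ℝ)
    (hδ0 : 0 < δ) (hδ : δ ≤ 1 / 3) (μ : Measure ℝ) (hμ : ternarySpec δ μ) :
    IsDoubling (nuProd d μ) :=
  product_ternary_measure_is_doubling_general d δ hδ0 hδ μ hμ
end
end

section
/- Fix δ ∈ (0,1/3] and integers 0 ≤ k ≤ n with 2δn ≤ k ≤ (2/3)n. Let μ and K(n,k) be as in the triadic construction, and let 𝒦^d(n,k) be the collection of triadic cubes of side length 3^{−n} whose union is the d-fold Cartesian product K(n,k)^d. Then the number of cubes satisfies #𝒦^d(n,k) ≤ e^{kd[1 + log(1/δ)]}. -/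
open MeasureTheory Set

noncomputable section

/-- The triadic interval `[i·3⁻ⁿ, (i+1)·3⁻ⁿ) ⊆ [0,1)` of generation `n`, `0 ≤ i < 3 ^ n`. -/
def triIco (n i : ℕ) : Set ℝ := Set.Ico ((i : ℝ) / 3 ^ n) (((i : ℝ) + 1) / 3 ^ n)

/-- Indices `0 ≤ i < 3 ^ n` of the "heavy" triadic intervals of generation `n` inside `[0,1)`,
those with `μ(I) ≥ δ ^ k · (1 - 2δ) ^ (n - k)`. -/
def goodIdx (δ : ℝ) (μ : Measure ℝ) (n k : ℕ) : Set ℕ :=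
  {i | i < 3 ^ n ∧ ENNReal.ofReal (δ ^ k * (1 - 2 * δ) ^ (n - k)) ≤ μ (triIco n i)}

/-- `K(n,k)`: the union of the triadic intervals `I ⊆ [0,1)` of generation `n` with
`μ(I) ≥ δ ^ k · (1 - 2δ) ^ (n - k)`. -/
def Kset (δ : ℝ) (μ : Measure ℝ) (n k : ℕ) : Set ℝ := ⋃ i ∈ goodIdx δ μ n k, triIco n i

/-- `𝒦^d(n,k)`: the collection of triadic cubes of side `3⁻ⁿ` whose union is `K(n,k)^d`. -/
def cubesNK (d : ℕ) (δ : ℝ) (μ : Measure ℝ) (n k : ℕ) : Set (Set (Fin d → ℝ)) :=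
  {Q | ∃ f : Fin d → ℕ, (∀ j, f j ∈ goodIdx δ μ n k) ∧
    Q = Set.pi Set.univ fun j => triIco n (f j)}

/-! The triadic interval with `m` digits equal to `1` has mass `δ^(n-m) (1-2δ)^m = δ^n r^m`,
`r = (1-2δ)/δ`, so every heavy interval of `K(n,k)` satisfies `r^(n-k) ≤ r^m`, hence `t^(n-k) ≤ t^m`
for every weight `1 ≤ t ≤ r`. Summing `t^m` over all `3^n` intervals gives `(2+t)^n`, so
`#K(n,k) ≤ (2+t)^n / t^(n-k)`. The choice `t = 2(n-k)/k` is admissible exactly when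
`2δn ≤ k ≤ 2n/3`, and then `(2+t)^n / t^(n-k) = (2n/k)^k (n/(n-k))^(n-k) ≤ (1/δ)^k e^k`.
The cubes of `𝒦^d(n,k)` are indexed by `d`-tuples of heavy intervals. -/

theorem Set.ncard_univ_pi_const {ι α : Type*} [Fintype ι] (s : Set α) :
    (Set.pi Set.univ fun _ : ι => s).ncard = s.ncard ^ Fintype.card ι := by
  rw [Set.ncard_def, Set.encard_pi_eq_prod_encard, ENat.toNat_prod, Finset.prod_const,
    Finset.card_univ, Set.ncard_def]

theorem Finset.sum_range_three_mul {M : Type*} [AddCommMonoid M] (f : ℕ → M) (m : ℕ) :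
    ∑ i ∈ Finset.range (3 * m), f i =
      ∑ a ∈ Finset.range m, (f (3 * a) + f (3 * a + 1) + f (3 * a + 2)) := by
  induction m with
  | zero => simp
  | succ m ih =>
    rw [Finset.sum_range_succ, ← ih, show 3 * (m + 1) = 3 * m + 1 + 1 + 1 by omega,
      Finset.sum_range_succ, Finset.sum_range_succ, Finset.sum_range_succ]
    abel

theorem ternaryOnes_three_mul_add (a : ℕ) {b : ℕ} (hb : b < 3) :
    ternaryOnes (3 * a + b) = ternaryOnes a + if b = 1 then 1 else 0 := by
  rcases eq_or_ne (3 * a + b) 0 with h | h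
  · obtain ⟨rfl, rfl⟩ : a = 0 ∧ b = 0 := by omega
    simp
  · rw [ternaryOnes, add_comm, Nat.digits_add 3 (by norm_num) b a hb (by omega), List.count_cons]
    simp [ternaryOnes]

theorem ternaryOnes_le {n i : ℕ} (hi : i < 3 ^ n) : ternaryOnes i ≤ n :=
  (List.count_le_length).trans ((Nat.digits_length_le_iff (by norm_num) i).mpr hi)

theorem sum_range_pow_ternaryOnes {R : Type*} [CommSemiring R] (t : R) (n : ℕ) :
    ∑ i ∈ Finset.range (3 ^ n), t ^ ternaryOnes i = (2 + t) ^ n := by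
  induction n with
  | zero => simp [ternaryOnes]
  | succ n ih =>
    rw [pow_succ', Finset.sum_range_three_mul, pow_succ', ← ih, Finset.mul_sum]
    refine Finset.sum_congr rfl fun a _ => ?_
    have h0 : ternaryOnes (3 * a) = ternaryOnes a := by
      simpa using ternaryOnes_three_mul_add a (b := 0) (by norm_num)
    have h1 : ternaryOnes (3 * a + 1) = ternaryOnes a + 1 := by
      simpa using ternaryOnes_three_mul_add a (b := 1) (by norm_num)
    have h2 : ternaryOnes (3 * a + 2) = ternaryOnes a := by
      simpa using ternaryOnes_three_mul_add a (b := 2) (by norm_num)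
    rw [h0, h1, h2, pow_succ]
    ring

theorem pow_le_pow_of_pow_le_pow_of_le {R : Type*} [Semiring R] [LinearOrder R]
    [IsStrictOrderedRing R] {r t : R} {a b : ℕ} (ht : 1 ≤ t) (htr : t ≤ r) (h : r ^ a ≤ r ^ b) :
    t ^ a ≤ t ^ b := by
  rcases le_or_gt a b with hab | hba
  · exact pow_le_pow_right₀ ht hab
  · have hr : r ≤ 1 := not_lt.mp fun hr => (pow_lt_pow_right₀ hr hba).not_ge h
    simp [le_antisymm (htr.trans hr) ht]

theorem card_mul_pow_le_two_add_pow {R : Type*} [CommSemiring R] [PartialOrder R]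
    [IsOrderedRing R] {n j : ℕ} {s : Finset ℕ} (hs : s ⊆ Finset.range (3 ^ n)) {t : R}
    (ht : 0 ≤ t) (h : ∀ i ∈ s, t ^ j ≤ t ^ ternaryOnes i) : s.card * t ^ j ≤ (2 + t) ^ n :=
  calc s.card * t ^ j = ∑ _i ∈ s, t ^ j := by rw [Finset.sum_const, nsmul_eq_mul]
    _ ≤ ∑ i ∈ s, t ^ ternaryOnes i := Finset.sum_le_sum h
    _ ≤ ∑ i ∈ Finset.range (3 ^ n), t ^ ternaryOnes i :=
      Finset.sum_le_sum_of_subset_of_nonneg hs fun _ _ _ => pow_nonneg ht _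
    _ = (2 + t) ^ n := sum_range_pow_ternaryOnes t n

open Real in
theorem two_add_div_pow_le {k m : ℕ} (hk : 0 < k) :
    (2 + 2 * m / k : ℝ) ^ (k + m) ≤ exp k * (2 * (k + m) / k) ^ k * (2 * m / k) ^ m := by
  have hk' : (0 : ℝ) < k := by exact_mod_cast hk
  have hsplit : (2 * (k + m) / k : ℝ) ^ m = (1 + k / m) ^ m * (2 * m / k) ^ m := by
    rcases Nat.eq_zero_or_pos m with rfl | hm
    · simp
    · rw [← mul_pow]
      congr 1
      field_simp
      ring
  have hexp : (1 + k / m : ℝ) ^ m ≤ exp k := by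
    simpa [sub_eq_add_neg, neg_div] using
      one_sub_div_pow_le_exp_neg (n := m) (t := -k) (by linarith [(m.cast_nonneg : (0:ℝ) ≤ m)])
  calc (2 + 2 * m / k : ℝ) ^ (k + m) = (2 * (k + m) / k) ^ k * (2 * (k + m) / k) ^ m := by
        rw [pow_add]; field_simp
    _ ≤ (2 * (k + m) / k) ^ k * (exp k * (2 * m / k) ^ m) := by
        rw [hsplit]; gcongr
    _ = exp k * (2 * (k + m) / k) ^ k * (2 * m / k) ^ m := by ring

section TriadicMeasure

variable {δ : ℝ} {μ : Measure ℝ} {n k i : ℕ}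

theorem goodIdx_finite (δ : ℝ) (μ : Measure ℝ) (n k : ℕ) : (goodIdx δ μ n k).Finite :=
  (Set.finite_Iio (3 ^ n)).subset fun _ hi => hi.1

theorem measure_triIco (hμ : ternarySpec δ μ) (hi : i < 3 ^ n) :
    μ (triIco n i) = ENNReal.ofReal (δ ^ (n - ternaryOnes i) * (1 - 2 * δ) ^ ternaryOnes i) := by
  simpa [triIco] using hμ 0 n i hi

theorem pow_le_pow_of_mem_goodIdx (hδ0 : 0 < δ) (hδ : δ ≤ 1 / 2) (hμ : ternarySpec δ μ)
    (hkn : k ≤ n) (hi : i ∈ goodIdx δ μ n k) :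
    ((1 - 2 * δ) / δ) ^ (n - k) ≤ ((1 - 2 * δ) / δ) ^ ternaryOnes i := by
  have mass_eq : ∀ j ≤ n, δ ^ (n - j) * (1 - 2 * δ) ^ j = δ ^ n * ((1 - 2 * δ) / δ) ^ j := by
    intro j hj
    rw [div_pow, ← pow_sub_mul_pow δ hj]
    field_simp
  have hgood := hi.2
  rw [measure_triIco hμ hi.1, ENNReal.ofReal_le_ofReal_iff
    (mul_nonneg (pow_nonneg hδ0.le _) (pow_nonneg (by linarith) _))] at hgood
  have lhs_eq := mass_eq (n - k) (Nat.sub_le n k)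
  rw [Nat.sub_sub_self hkn] at lhs_eq
  rw [lhs_eq, mass_eq _ (ternaryOnes_le hi.1)] at hgood
  exact le_of_mul_le_mul_left hgood (pow_pos hδ0 n)

theorem ncard_goodIdx_mul_pow_le (hδ0 : 0 < δ) (hδ : δ ≤ 1 / 2) (hμ : ternarySpec δ μ)
    (hkn : k ≤ n) {t : ℝ} (ht : 1 ≤ t) (htr : t ≤ (1 - 2 * δ) / δ) :
    (goodIdx δ μ n k).ncard * t ^ (n - k) ≤ (2 + t) ^ n := by
  have hfin := goodIdx_finite δ μ n k
  rw [Set.ncard_eq_toFinset_card _ hfin]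
  refine card_mul_pow_le_two_add_pow (fun i hi => ?_) (by linarith) fun i hi => ?_
  · exact Finset.mem_range.mpr (hfin.mem_toFinset.mp hi).1
  · exact pow_le_pow_of_pow_le_pow_of_le ht htr
      (pow_le_pow_of_mem_goodIdx hδ0 hδ hμ hkn (hfin.mem_toFinset.mp hi))

theorem ncard_goodIdx_le (hδ0 : 0 < δ) (hδ : δ ≤ 1 / 3) (hμ : ternarySpec δ μ)
    (hk1 : 2 * δ * n ≤ (k : ℝ)) (hk2 : (k : ℝ) ≤ 2 / 3 * n) :
    ((goodIdx δ μ n k).ncard : ℝ) ≤ Real.exp (k * (1 + Real.log (1 / δ))) := by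
  rcases Nat.eq_zero_or_pos k with rfl | hk
  · obtain rfl : n = 0 := by
      rw [Nat.cast_zero] at hk1
      have hn : (n : ℝ) ≤ 0 := by nlinarith
      exact Nat.cast_nonpos.mp hn
    have hsub : goodIdx δ μ 0 0 ⊆ {0} := fun i hi => by simpa using hi.1
    simpa using Set.ncard_le_ncard hsub
  have hkn : k ≤ n := by exact_mod_cast (by linarith : (k : ℝ) ≤ n)
  obtain ⟨m, rfl⟩ := Nat.exists_eq_add_of_le hkn
  have hk' : (0 : ℝ) < k := by exact_mod_cast hk
  push_cast at hk1 hk2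
  set t : ℝ := 2 * m / k with ht_def
  have ht : 1 ≤ t := by rw [ht_def, le_div_iff₀ hk']; linarith
  have htr : t ≤ (1 - 2 * δ) / δ := by
    rw [ht_def, div_le_div_iff₀ hk' hδ0]; linarith
  have hbase : 2 * (k + m) / k ≤ 1 / δ := by
    rw [div_le_div_iff₀ hk' hδ0]; linarith
  have hcount := ncard_goodIdx_mul_pow_le hδ0 (by linarith) hμ (Nat.le_add_right k m) ht htr
  rw [Nat.add_sub_cancel_left] at hcount
  calc ((goodIdx δ μ (k + m) k).ncard : ℝ)
      ≤ Real.exp k * (2 * (k + m) / k) ^ k :=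
        le_of_mul_le_mul_right (hcount.trans (two_add_div_pow_le hk)) (by positivity)
    _ ≤ Real.exp k * (1 / δ) ^ k := by gcongr
    _ = Real.exp (k * (1 + Real.log (1 / δ))) := by
        rw [mul_add, mul_one, Real.exp_add, Real.exp_nat_mul, Real.exp_log (by positivity)]

end TriadicMeasure

theorem cubesNK_eq_image (d : ℕ) (δ : ℝ) (μ : Measure ℝ) (n k : ℕ) :
    cubesNK d δ μ n k =
      (fun f : Fin d → ℕ => Set.pi Set.univ fun j => triIco n (f j)) ''
        Set.pi Set.univ fun _ => goodIdx δ μ n k := by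
  ext Q
  simp [cubesNK, eq_comm]

theorem ncard_cubesNK_le (d : ℕ) (δ : ℝ) (μ : Measure ℝ) (n k : ℕ) :
    (cubesNK d δ μ n k).ncard ≤ (goodIdx δ μ n k).ncard ^ d := by
  have hfin := goodIdx_finite δ μ n k
  rw [cubesNK_eq_image]
  exact (Set.ncard_image_le (Set.Finite.pi fun _ => hfin)).trans_eq
    (by rw [Set.ncard_univ_pi_const, Fintype.card_fin])

theorem card_cubesNK_le_general (d : ℕ) (δ : ℝ) (hδ0 : 0 < δ) (hδ : δ ≤ 1 / 3)
    (μ : Measure ℝ) (hμ : ternarySpec δ μ) (n k : ℕ)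
    (hk1 : 2 * δ * n ≤ (k : ℝ)) (hk2 : (k : ℝ) ≤ 2 / 3 * n) :
    ((cubesNK d δ μ n k).ncard : ℝ) ≤
      Real.exp ((k : ℝ) * d * (1 + Real.log (1 / δ))) :=
  calc ((cubesNK d δ μ n k).ncard : ℝ) ≤ ((goodIdx δ μ n k).ncard : ℝ) ^ d := by
        exact_mod_cast ncard_cubesNK_le d δ μ n k
    _ ≤ Real.exp (k * (1 + Real.log (1 / δ))) ^ d := by
        gcongr; exact ncard_goodIdx_le hδ0 hδ hμ hk1 hk2
    _ = Real.exp ((k : ℝ) * d * (1 + Real.log (1 / δ))) := by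
        rw [← Real.exp_nat_mul]; ring_nf

/-- If `2δn ≤ k ≤ (2/3)n` then `#𝒦^d(n,k) ≤ exp(kd(1 + log(1/δ)))`. -/
theorem card_cubesNK_le (d : ℕ) (hd : 2 ≤ d) (δ : ℝ) (hδ0 : 0 < δ) (hδ : δ ≤ 1 / 3)
    (μ : Measure ℝ) (hμ : ternarySpec δ μ) (n k : ℕ)
    (hk1 : 2 * δ * n ≤ (k : ℝ)) (hk2 : (k : ℝ) ≤ 2 / 3 * n) :
    ((cubesNK d δ μ n k).ncard : ℝ) ≤
      Real.exp ((k : ℝ) * d * (1 + Real.log (1 / δ))) :=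
  card_cubesNK_le_general d δ hδ0 hδ μ hμ n k hk1 hk2
end
end
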